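/- arXiv:1512.00834 — 6 statements merged into one kernel-verified Lean document; each statement's English description precedes it below -/
import Mathlib

section
/- Let D_r(t) = Σ_{i=0}^{r} B_i(t) C_{r-i}(t), where B_i(t) = Pr[Bin(k_p t, p) = i] and C_j(t) = Pr[Bin(k_q t, q) = j]. If k_p t > r and k_q t > r, 0 < p < 1, 0 < q < 1, and φ = k_p p + k_q q, then D_{r+1}(t) ≤ (φ t / (1 - max(p,q))) * D_r(t). -/
/-!
Since `C(n,k+1) ≤ n C(n,k)`, the binomial mass `C(n,k) p^k (1-p)^(n-k)` grows by at most the factor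
`n p / (1-p)` from one index to the next. Splitting `D_{r+1} = B_0 C_{r+1} + Σ_{i ≤ r} B_{i+1} C_{r-i}`,
the step is charged to the `C`-factor in the first term and to the `B`-factor in the others, giving
`D_{r+1} ≤ (k_p t p / (1-p) + k_q t q / (1-q)) D_r`; both denominators are at least `1 - max p q`.
-/

open Finset

theorem Nat.choose_succ_le_mul (n k : ℕ) : n.choose (k + 1) ≤ n * n.choose k :=
  calc n.choose (k + 1) ≤ n.choose (k + 1) * (k + 1) := Nat.le_mul_of_pos_right _ k.succ_pos
    _ = n.choose k * (n - k) := Nat.choose_succ_right_eq n k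
    _ ≤ n * n.choose k := by rw [mul_comm]; exact Nat.mul_le_mul_right _ (Nat.sub_le n k)

noncomputable def binomialMass (n : ℕ) (p : ℝ) (k : ℕ) : ℝ :=
  n.choose k * p ^ k * (1 - p) ^ (n - k)

section binomialMass

variable {p : ℝ}

theorem binomialMass_nonneg (hp0 : 0 ≤ p) (hp1 : p ≤ 1) (n k : ℕ) : 0 ≤ binomialMass n p k := by
  have : 0 ≤ 1 - p := sub_nonneg.mpr hp1
  unfold binomialMass
  positivity

theorem binomialMass_succ_le (hp0 : 0 ≤ p) (hp1 : p < 1) (n k : ℕ) :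
    binomialMass n p (k + 1) ≤ n * p / (1 - p) * binomialMass n p k := by
  have h1p : 0 < 1 - p := sub_pos.mpr hp1
  rcases le_or_gt n k with hnk | hkn
  · rw [binomialMass, Nat.choose_eq_zero_of_lt (Nat.lt_succ_of_le hnk), Nat.cast_zero, zero_mul,
      zero_mul]
    exact mul_nonneg (by positivity) (binomialMass_nonneg hp0 hp1.le n k)
  · have hchoose : (n.choose (k + 1) : ℝ) ≤ n * n.choose k := by
      exact_mod_cast Nat.choose_succ_le_mul n k
    have hexp : n - k = n - (k + 1) + 1 := by omega
    calc binomialMass n p (k + 1)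
        ≤ n * n.choose k * (p ^ (k + 1) * (1 - p) ^ (n - (k + 1))) := by
          rw [binomialMass, mul_assoc]
          gcongr
      _ = n * p / (1 - p) * binomialMass n p k := by
          rw [binomialMass, hexp, pow_succ, pow_succ]
          field_simp

end binomialMass

theorem Finset.Nat.sum_antidiagonal_succ_mul_le {f g : ℕ → ℝ} {a b : ℝ}
    (hf : ∀ i, 0 ≤ f i) (hg : ∀ j, 0 ≤ g j) (hb : 0 ≤ b)
    (hfa : ∀ i, f (i + 1) ≤ a * f i) (hgb : ∀ j, g (j + 1) ≤ b * g j) (n : ℕ) :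
    ∑ ij ∈ antidiagonal (n + 1), f ij.1 * g ij.2 ≤
      (a + b) * ∑ ij ∈ antidiagonal n, f ij.1 * g ij.2 := by
  have hfirst : f 0 * g n ≤ ∑ ij ∈ antidiagonal n, f ij.1 * g ij.2 :=
    single_le_sum (f := fun ij : ℕ × ℕ => f ij.1 * g ij.2) (fun ij _ => mul_nonneg (hf _) (hg _))
      (a := (0, n)) (mem_antidiagonal.mpr (zero_add n))
  rw [sum_antidiagonal_succ, add_mul, mul_sum, add_comm]
  refine add_le_add (sum_le_sum fun ij _ => ?_) ?_
  · exact mul_le_mul_of_nonneg_right (hfa ij.1) (hg _) |>.trans_eq (mul_assoc _ _ _)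
  · calc f 0 * g (n + 1) ≤ f 0 * (b * g n) := mul_le_mul_of_nonneg_left (hgb n) (hf 0)
      _ = b * (f 0 * g n) := mul_left_comm _ _ _
      _ ≤ _ := mul_le_mul_of_nonneg_left hfirst hb

theorem binom_sum_pmf_succ_le_general (kp kq t r : ℕ) (p q : ℝ)
    (hp0 : 0 < p) (hp1 : p < 1) (hq0 : 0 < q) (hq1 : q < 1)
    (φ : ℝ) (hφ : φ = kp * p + kq * q)
    (D : ℕ → ℝ)
    (hD : ∀ s, D s = ∑ i ∈ Finset.range (s + 1),
      ((kp * t).choose i : ℝ) * p ^ i * (1 - p) ^ (kp * t - i) *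
      ((kq * t).choose (s - i) : ℝ) * q ^ (s - i) * (1 - q) ^ (kq * t - (s - i))) :
    D (r + 1) ≤ (φ * t / (1 - max p q)) * D r := by
  have hDconv : ∀ s, D s =
      ∑ ij ∈ antidiagonal s, binomialMass (kp * t) p ij.1 * binomialMass (kq * t) q ij.2 := by
    intro s
    rw [hD, Nat.sum_antidiagonal_eq_sum_range_succ_mk]
    exact sum_congr rfl fun i _ => by simp only [binomialMass]; ring
  have hmax : 0 < 1 - max p q := sub_pos.mpr (max_lt hp1 hq1)
  have hcoeff : (kp * t : ℕ) * p / (1 - p) + (kq * t : ℕ) * q / (1 - q) ≤ φ * t / (1 - max p q) :=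
    calc _ ≤ (kp * t : ℕ) * p / (1 - max p q) + (kq * t : ℕ) * q / (1 - max p q) := by
          gcongr <;> simp
      _ = φ * t / (1 - max p q) := by rw [hφ]; push_cast; ring
  rw [hDconv, hDconv]
  refine (Nat.sum_antidiagonal_succ_mul_le (binomialMass_nonneg hp0.le hp1.le _)
    (binomialMass_nonneg hq0.le hq1.le _) (div_nonneg (by positivity) (sub_pos.mpr hq1).le)
    (binomialMass_succ_le hp0.le hp1 _) (binomialMass_succ_le hq0.le hq1 _) r).trans ?_
  exact mul_le_mul_of_nonneg_right hcoeff
    (sum_nonneg fun ij _ => mul_nonneg (binomialMass_nonneg hp0.le hp1.le _ _)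
      (binomialMass_nonneg hq0.le hq1.le _ _))

theorem binom_sum_pmf_succ_le (kp kq t r : ℕ) (p q : ℝ)
    (hkp : r < kp * t) (hkq : r < kq * t)
    (hp0 : 0 < p) (hp1 : p < 1) (hq0 : 0 < q) (hq1 : q < 1)
    (φ : ℝ) (hφ : φ = kp * p + kq * q)
    (D : ℕ → ℝ)
    (hD : ∀ s, D s = ∑ i ∈ Finset.range (s + 1),
      ((kp * t).choose i : ℝ) * p ^ i * (1 - p) ^ (kp * t - i) *
      ((kq * t).choose (s - i) : ℝ) * q ^ (s - i) * (1 - q) ^ (kq * t - (s - i))) :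
    D (r + 1) ≤ (φ * t / (1 - max p q)) * D r :=
  binom_sum_pmf_succ_le_general kp kq t r p q hp0 hp1 hq0 hq1 φ hφ D hD
end

section
/- Suppose φ t (1 - max(p,q))^{-1} < 2/3, where φ = k_p p + k_q q. Then D_{a+1}(t) < (2/3) D_a(t), where D_r(t) is the probability that the sum of independent binomials Bin(k_p t, p) and Bin(k_q t, q) equals r, for all a with k_p t > a and k_q t > a. -/
/-!
Write `D` as the convolution of the binomial weights `b_n(p, ·)` and `b_m(q, ·)`,
with `n = k_p t`, `m = k_q t`. Each weight has successive ratio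
`b(k+1)/b(k) = (n-k)x/((k+1)(1-x)) ≤ n x/(1-x)`.
Shifting the index of either factor of the convolution then gives
`D (a+1) ≤ (n p/(1-p) + m q/(1-q)) D a ≤ φ t (1 - max p q)⁻¹ D a`,
and `D a > 0` since `a ≤ m`.
-/

open Finset

def binomWeight (n : ℕ) (x : ℝ) (k : ℕ) : ℝ := n.choose k * x ^ k * (1 - x) ^ (n - k)

lemma binomWeight_nonneg (n : ℕ) {x : ℝ} (hx0 : 0 ≤ x) (hx1 : x ≤ 1) (k : ℕ) :
    0 ≤ binomWeight n x k := by
  unfold binomWeight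
  have : 0 ≤ 1 - x := by linarith
  positivity

lemma binomWeight_pos {n k : ℕ} {x : ℝ} (hx0 : 0 < x) (hx1 : x < 1) (hk : k ≤ n) :
    0 < binomWeight n x k := by
  unfold binomWeight
  have : 0 < 1 - x := by linarith
  have : (0 : ℝ) < n.choose k := by exact_mod_cast Nat.choose_pos hk
  positivity

lemma succ_mul_binomWeight_succ (n k : ℕ) (x : ℝ) :
    (k + 1) * (1 - x) * binomWeight n x (k + 1) = (n - k : ℕ) * x * binomWeight n x k := by
  unfold binomWeight
  rcases lt_or_ge k n with hk | hk
  · have hchoose : ((n.choose (k + 1) * (k + 1) : ℕ) : ℝ) = (n.choose k * (n - k) : ℕ) :=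
      congrArg _ (Nat.choose_succ_right_eq n k)
    rw [show n - k = (n - (k + 1)) + 1 by omega] at *
    push_cast at hchoose ⊢
    linear_combination x ^ k * x * (1 - x) ^ (n - (k + 1)) * (1 - x) * hchoose
  · simp [Nat.choose_eq_zero_of_lt (Nat.lt_succ_of_le hk), Nat.sub_eq_zero_of_le hk]

lemma binomWeight_succ_le (n k : ℕ) {x : ℝ} (hx0 : 0 ≤ x) (hx1 : x < 1) :
    binomWeight n x (k + 1) ≤ n * x / (1 - x) * binomWeight n x k := by
  have h1x : 0 < 1 - x := by linarith
  have hb := binomWeight_nonneg n hx0 hx1.le k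
  rw [div_mul_eq_mul_div, le_div_iff₀ h1x]
  have hnk : ((n - k : ℕ) : ℝ) ≤ (k + 1) * n := by
    have : ((n - k : ℕ) : ℝ) ≤ n := by exact_mod_cast Nat.sub_le n k
    nlinarith [(n.cast_nonneg : (0 : ℝ) ≤ n)]
  have key := succ_mul_binomWeight_succ n k x
  have hxb : 0 ≤ x * binomWeight n x k := mul_nonneg hx0 hb
  nlinarith [mul_le_mul_of_nonneg_right hnk hxb]

lemma convolution_succ_le {f g : ℕ → ℝ} {c d : ℝ} (hf : ∀ i, 0 ≤ f i) (hg : ∀ j, 0 ≤ g j)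
    (hd : 0 ≤ d) (hfc : ∀ i, f (i + 1) ≤ c * f i) (hgd : ∀ j, g (j + 1) ≤ d * g j) (s : ℕ) :
    ∑ i ∈ range (s + 1 + 1), f i * g (s + 1 - i) ≤
      (c + d) * ∑ i ∈ range (s + 1), f i * g (s - i) := by
  rw [sum_range_succ', add_mul, mul_sum]
  gcongr ?_ + ?_
  · refine sum_le_sum fun i _ => ?_
    rw [show s + 1 - (i + 1) = s - i by omega, ← mul_assoc]
    exact mul_le_mul_of_nonneg_right (hfc i) (hg _)
  · calc f 0 * g (s + 1) ≤ d * (f 0 * g (s - 0)) := by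
          rw [Nat.sub_zero, mul_left_comm]; exact mul_le_mul_of_nonneg_left (hgd s) (hf 0)
      _ ≤ d * ∑ i ∈ range (s + 1), f i * g (s - i) :=
          mul_le_mul_of_nonneg_left
            (single_le_sum (f := fun i => f i * g (s - i)) (fun i _ => mul_nonneg (hf i) (hg _))
              (mem_range.2 s.succ_pos)) hd

lemma div_one_sub_add_div_one_sub_le {u v p q : ℝ} (hu : 0 ≤ u) (hv : 0 ≤ v) (hp : p < 1)
    (hq : q < 1) : u / (1 - p) + v / (1 - q) ≤ (u + v) / (1 - max p q) := by
  have hmax : 0 < 1 - max p q := by linarith [max_lt hp hq]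
  rw [add_div]
  gcongr <;> linarith [le_max_left p q, le_max_right p q]

theorem binom_sum_pmf_succ_lt_general (kp kq t a : ℕ) (p q : ℝ)
    (hkb : a < kq * t)
    (hp0 : 0 < p) (hp1 : p < 1) (hq0 : 0 < q) (hq1 : q < 1)
    (φ : ℝ) (hφ : φ = kp * p + kq * q)
    (hsmall : φ * t * (1 - max p q)⁻¹ < 2 / 3)
    (D : ℕ → ℝ)
    (hD : ∀ s, D s = ∑ i ∈ Finset.range (s + 1),
      ((kp * t).choose i : ℝ) * p ^ i * (1 - p) ^ (kp * t - i) *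
      ((kq * t).choose (s - i) : ℝ) * q ^ (s - i) * (1 - q) ^ (kq * t - (s - i))) :
    D (a + 1) < (2 / 3) * D a := by
  set n := kp * t
  set m := kq * t
  have hconv : ∀ s, D s = ∑ i ∈ range (s + 1), binomWeight n p i * binomWeight m q (s - i) :=
    fun s => by rw [hD]; exact sum_congr rfl fun i _ => by unfold binomWeight; ring
  have hstep : D (a + 1) ≤ (n * p / (1 - p) + m * q / (1 - q)) * D a := by
    rw [hconv, hconv]
    exact convolution_succ_le (binomWeight_nonneg n hp0.le hp1.le)
      (binomWeight_nonneg m hq0.le hq1.le)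
      (div_nonneg (by positivity) (by linarith))
      (fun i => binomWeight_succ_le n i hp0.le hp1) (fun j => binomWeight_succ_le m j hq0.le hq1) a
  have hpos : 0 < D a := by
    rw [hconv]
    refine sum_pos' (fun i _ => mul_nonneg (binomWeight_nonneg n hp0.le hp1.le i)
      (binomWeight_nonneg m hq0.le hq1.le _)) ⟨0, mem_range.2 a.succ_pos, ?_⟩
    rw [Nat.sub_zero]
    exact mul_pos (binomWeight_pos hp0 hp1 n.zero_le) (binomWeight_pos hq0 hq1 hkb.le)
  have hratio : n * p / (1 - p) + m * q / (1 - q) < 2 / 3 := by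
    calc n * p / (1 - p) + m * q / (1 - q) ≤ (n * p + m * q) / (1 - max p q) :=
          div_one_sub_add_div_one_sub_le (by positivity) (by positivity) hp1 hq1
      _ = φ * t * (1 - max p q)⁻¹ := by simp only [n, m, hφ]; push_cast; ring
      _ < 2 / 3 := hsmall
  exact hstep.trans_lt (mul_lt_mul_of_pos_right hratio hpos)

theorem binom_sum_pmf_succ_lt (kp kq t a : ℕ) (p q : ℝ)
    (hka : a < kp * t) (hkb : a < kq * t)
    (hp0 : 0 < p) (hp1 : p < 1) (hq0 : 0 < q) (hq1 : q < 1)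
    (φ : ℝ) (hφ : φ = kp * p + kq * q)
    (hsmall : φ * t * (1 - max p q)⁻¹ < 2 / 3)
    (D : ℕ → ℝ)
    (hD : ∀ s, D s = ∑ i ∈ Finset.range (s + 1),
      ((kp * t).choose i : ℝ) * p ^ i * (1 - p) ^ (kp * t - i) *
      ((kq * t).choose (s - i) : ℝ) * q ^ (s - i) * (1 - q) ^ (kq * t - (s - i))) :
    D (a + 1) < (2 / 3) * D a :=
  binom_sum_pmf_succ_lt_general kp kq t a p q hkb hp0 hp1 hq0 hq1 φ hφ hsmall D hD
end

section
/- Let r' ≥ 1 be a natural number, p ≥ q probabilities in (0, 1/2], x ≥ 1 and t natural numbers with xt an integer and φ = k_p p + k_q q satisfying φ x t ≤ 1/3. Then Pr[Bin(k_p t x, p) + Bin(k_q t x, q) = r'] ≤ (φ x t / (1-p))^{r'} / r'! * (1-p)^{x t k_p} (1-q)^{x t k_q}. -/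
/-!
Bound each binomial probability by `C(n, i) ≤ nⁱ / i!`, which gives
`Pr[Bin(n, p) = i] ≤ (1 - p)ⁿ (n p / (1 - p))ⁱ / i!`; for the `q`-summand use `1 - p ≤ 1 - q` in
the denominator. The convolution of the two resulting exponential-type sequences is summed exactly
by the binomial theorem, `∑ aⁱ / i! · b^(r - i) / (r - i)! = (a + b)ʳ / r!`, and
`a + b = φ x t / (1 - p)`.
-/

open Finset

lemma add_pow_div_factorial {K : Type*} [Field K] [CharZero K] (a b : K) (r : ℕ) :
    (a + b) ^ r / r.factorial =
      ∑ i ∈ range (r + 1), a ^ i / i.factorial * (b ^ (r - i) / (r - i).factorial) := by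
  rw [add_pow, sum_div]
  refine sum_congr rfl fun i hi => ?_
  have hir : i ≤ r := Nat.lt_succ_iff.mp (mem_range.mp hi)
  have hfact : (r.choose i : K) * i.factorial * (r - i).factorial = r.factorial := by
    exact_mod_cast Nat.choose_mul_factorial_mul_factorial hir
  have hi! : (i.factorial : K) ≠ 0 := mod_cast i.factorial_ne_zero
  have hri! : ((r - i).factorial : K) ≠ 0 := mod_cast (r - i).factorial_ne_zero
  have hr! : (r.factorial : K) ≠ 0 := mod_cast r.factorial_ne_zero
  field_simp
  linear_combination a ^ i * b ^ (r - i) * hfact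

lemma choose_mul_pow_mul_one_sub_pow_le (n i : ℕ) {p c : ℝ} (hp : 0 ≤ p) (hc : 0 < c)
    (hcp : c ≤ 1 - p) :
    (n.choose i : ℝ) * p ^ i * (1 - p) ^ (n - i) ≤
      (1 - p) ^ n * ((n * p / c) ^ i / i.factorial) := by
  have h1p : 0 < 1 - p := hc.trans_le hcp
  rcases le_or_gt i n with hin | hni
  · calc (n.choose i : ℝ) * p ^ i * (1 - p) ^ (n - i)
        ≤ (n : ℝ) ^ i / i.factorial * p ^ i * ((1 - p) ^ n * ((1 - p) ^ i)⁻¹) := by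
          rw [pow_sub₀ _ h1p.ne' hin]
          gcongr
          exact Nat.choose_le_pow_div i n
      _ = (1 - p) ^ n * ((n * p / (1 - p)) ^ i / i.factorial) := by
          rw [div_pow, mul_pow]
          ring
      _ ≤ (1 - p) ^ n * ((n * p / c) ^ i / i.factorial) := by
          gcongr
  · rw [Nat.choose_eq_zero_of_lt hni, Nat.cast_zero, zero_mul, zero_mul]
    exact mul_nonneg (pow_nonneg h1p.le n) (by positivity)

theorem binom_sum_pmf_upper_general (kp kq x t r' : ℕ) (p q : ℝ)
    (hq0 : 0 < q) (hqp : q ≤ p) (hp : p ≤ 1/2)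
    (φ : ℝ) (hφ : φ = kp * p + kq * q) :
    (∑ i ∈ Finset.range (r' + 1),
        ((kp * x * t).choose i : ℝ) * p ^ i * (1 - p) ^ (kp * x * t - i) *
        ((kq * x * t).choose (r' - i) : ℝ) * q ^ (r' - i) * (1 - q) ^ (kq * x * t - (r' - i)))
      ≤ (φ * x * t / (1 - p)) ^ r' / (r'.factorial : ℝ) *
          (1 - p) ^ (x * t * kp) * (1 - q) ^ (x * t * kq) := by
  have hp0 : 0 ≤ p := hq0.le.trans hqp
  have h1p : 0 < 1 - p := by linarith
  have h1q : 0 < 1 - q := by linarith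
  set n := kp * x * t
  set m := kq * x * t
  have hsum : φ * x * t / (1 - p) = n * p / (1 - p) + m * q / (1 - p) := by
    simp only [n, m, hφ]
    push_cast
    ring
  rw [show x * t * kp = n by ring, show x * t * kq = m by ring, hsum, add_pow_div_factorial,
    sum_mul, sum_mul]
  refine sum_le_sum fun i _ => ?_
  calc (n.choose i : ℝ) * p ^ i * (1 - p) ^ (n - i) *
        (m.choose (r' - i) : ℝ) * q ^ (r' - i) * (1 - q) ^ (m - (r' - i))
      = ((n.choose i : ℝ) * p ^ i * (1 - p) ^ (n - i)) *
          ((m.choose (r' - i) : ℝ) * q ^ (r' - i) * (1 - q) ^ (m - (r' - i))) := by ring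
    _ ≤ ((1 - p) ^ n * ((n * p / (1 - p)) ^ i / i.factorial)) *
          ((1 - q) ^ m * ((m * q / (1 - p)) ^ (r' - i) / (r' - i).factorial)) :=
        mul_le_mul (choose_mul_pow_mul_one_sub_pow_le n i hp0 h1p le_rfl)
          (choose_mul_pow_mul_one_sub_pow_le m (r' - i) hq0.le h1p (by linarith))
          (by positivity) (mul_nonneg (pow_nonneg h1p.le n) (by positivity))
    _ = _ := by ring

theorem binom_sum_pmf_upper (kp kq x t r' : ℕ) (p q : ℝ)
    (hkp : 1 ≤ kp) (hkq : 1 ≤ kq) (hx : 1 ≤ x) (hr' : 1 ≤ r')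
    (hq0 : 0 < q) (hqp : q ≤ p) (hp : p ≤ 1/2)
    (φ : ℝ) (hφ : φ = kp * p + kq * q)
    (hsmall : φ * x * t ≤ 1/3) :
    (∑ i ∈ Finset.range (r' + 1),
        ((kp * x * t).choose i : ℝ) * p ^ i * (1 - p) ^ (kp * x * t - i) *
        ((kq * x * t).choose (r' - i) : ℝ) * q ^ (r' - i) * (1 - q) ^ (kq * x * t - (r' - i)))
      ≤ (φ * x * t / (1 - p)) ^ r' / (r'.factorial : ℝ) *
          (1 - p) ^ (x * t * kp) * (1 - q) ^ (x * t * kq) :=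
  binom_sum_pmf_upper_general kp kq x t r' p q hq0 hqp hp φ hφ
end

section
/- Let Y be a random variable taking values in positive integers with Pr[Y ≤ t] > 0 for all t ≥ 1, and define ξ(t) = (1[Y ≤ t] - Pr[Y ≤ t]) / Pr[Y ≤ t]. Then ξ is a reverse martingale: E[ξ(t-1) | ξ(t), ξ(t+1), ...] = ξ(t) for all t ≥ 2. -/
/-!
Writing `p s = P(Y ≤ s)`, the function `ξ s = 1[Y ≤ s] / p s - 1` integrates to `1 - p r` over
`{Y ≤ r}` for every `r ≥ s`, a value independent of `s`. Hence `ξ (t - 1)` and `ξ t` have the same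
integral over every generator `{Y ≤ r}`, `r ≥ t`, of the reverse filtration at time `t` (and over
the whole space). These generators form a π-system, so the integrals agree on the whole
σ-algebra, and `ξ t` is measurable with respect to it.
-/

open MeasureTheory

namespace MeasureTheory

variable {Ω E : Type*} {m m0 : MeasurableSpace Ω} {μ : Measure Ω}
  [NormedAddCommGroup E] [NormedSpace ℝ E]

theorem setIntegral_eq_setIntegral_of_isPiSystem (hm : m ≤ m0) {C : Set (Set Ω)}
    (h_eq : m = MeasurableSpace.generateFrom C) (h_inter : IsPiSystem C) {f g : Ω → E}
    (hf : Integrable f μ) (hg : Integrable g μ) (h_univ : ∫ x, f x ∂μ = ∫ x, g x ∂μ)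
    (basic : ∀ s ∈ C, ∫ x in s, f x ∂μ = ∫ x in s, g x ∂μ) :
    ∀ s, MeasurableSet[m] s → ∫ x in s, f x ∂μ = ∫ x in s, g x ∂μ := by
  refine MeasurableSpace.induction_on_inter h_eq h_inter (by simp) basic ?_ ?_
  · intro s hs h_s
    rw [setIntegral_compl (hm s hs) hf, setIntegral_compl (hm s hs) hg, h_univ, h_s]
  · intro s hdisj hs h_s
    have hs' : ∀ i, MeasurableSet (s i) := fun i => hm _ (hs i)
    rw [integral_iUnion hs' hdisj hf.integrableOn, integral_iUnion hs' hdisj hg.integrableOn]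
    exact tsum_congr h_s

theorem condExp_ae_eq_of_isPiSystem [CompleteSpace E] [IsFiniteMeasure μ] (hm : m ≤ m0)
    {C : Set (Set Ω)}
    (h_eq : m = MeasurableSpace.generateFrom C) (h_inter : IsPiSystem C) {f g : Ω → E}
    (hf : Integrable f μ) (hg : Integrable g μ) (hgm : StronglyMeasurable[m] g)
    (h_univ : ∫ x, f x ∂μ = ∫ x, g x ∂μ)
    (basic : ∀ s ∈ C, ∫ x in s, f x ∂μ = ∫ x in s, g x ∂μ) :
    μ[f | m] =ᵐ[μ] g :=
  (ae_eq_condExp_of_forall_setIntegral_eq hm hf (fun _ _ _ => hg.integrableOn)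
    (fun s hs _ => (setIntegral_eq_setIntegral_of_isPiSystem hm h_eq h_inter hf hg h_univ
      basic s hs).symm) hgm.aestronglyMeasurable).symm

end MeasureTheory

theorem isPiSystem_setOf_le_of_le {Ω α : Type*} [LinearOrder α] (Y : Ω → α) (t : α) :
    IsPiSystem {A | ∃ s, t ≤ s ∧ A = {ω | Y ω ≤ s}} := by
  rintro _ ⟨s₁, hs₁, rfl⟩ _ ⟨s₂, hs₂, rfl⟩ -
  exact ⟨min s₁ s₂, le_min hs₁ hs₂, by ext ω; simp⟩

section IndicatorRatio

variable {Ω : Type*} {m m0 : MeasurableSpace Ω} {μ : Measure Ω} {A B : Set Ω}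

theorem integrable_indicator_one [IsFiniteMeasure μ] (hA : MeasurableSet A) :
    Integrable (A.indicator (1 : Ω → ℝ)) μ :=
  (integrable_const 1).indicator hA

noncomputable def indicatorRatio (μ : Measure Ω) (A : Set Ω) (ω : Ω) : ℝ :=
  (A.indicator 1 ω - μ.real A) / μ.real A

theorem stronglyMeasurable_indicatorRatio (hA : MeasurableSet[m] A) :
    StronglyMeasurable[m] (indicatorRatio μ A) :=
  ((measurable_const.indicator hA).sub measurable_const).div_const _ |>.stronglyMeasurable

theorem integrable_indicatorRatio [IsFiniteMeasure μ] (hA : MeasurableSet A) :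
    Integrable (indicatorRatio μ A) μ :=
  ((integrable_indicator_one hA).sub (integrable_const _)).div_const _

theorem setIntegral_indicatorRatio_of_subset [IsFiniteMeasure μ] (hA : MeasurableSet A)
    (hA0 : μ.real A ≠ 0) (hAB : A ⊆ B) :
    ∫ x in B, indicatorRatio μ A x ∂μ = 1 - μ.real B := by
  unfold indicatorRatio
  rw [integral_div, integral_sub (integrable_indicator_one hA).integrableOn
    (integrable_const _).integrableOn, setIntegral_indicator hA, Set.inter_eq_right.mpr hAB]
  simp only [Pi.one_apply, setIntegral_const, smul_eq_mul, mul_one]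
  field_simp

theorem integral_indicatorRatio [IsFiniteMeasure μ] (hA : MeasurableSet A)
    (hA0 : μ.real A ≠ 0) : ∫ x, indicatorRatio μ A x ∂μ = 1 - μ.real Set.univ := by
  rw [← setIntegral_univ, setIntegral_indicatorRatio_of_subset hA hA0 (Set.subset_univ A)]

end IndicatorRatio

theorem indicator_ratio_reverse_martingale_general
    {Ω : Type*} [m0 : MeasurableSpace Ω] (μ : Measure Ω) [IsProbabilityMeasure μ]
    (Y : Ω → ℕ)
    (hmeas : ∀ s : ℕ, MeasurableSet {ω | Y ω ≤ s})
    (hprob : ∀ t : ℕ, 1 ≤ t → 0 < μ {ω | Y ω ≤ t})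
    (𝒢 : ℕ → MeasurableSpace Ω)
    (h𝒢le : ∀ t, 𝒢 t ≤ m0)
    (h𝒢 : ∀ t : ℕ, 𝒢 t =
      MeasurableSpace.generateFrom {A | ∃ s, t ≤ s ∧ A = {ω | Y ω ≤ s}})
    (ξ : ℕ → Ω → ℝ)
    (hξ : ∀ t ω, ξ t ω =
      ((if Y ω ≤ t then (1 : ℝ) else 0) - (μ {ω' | Y ω' ≤ t}).toReal) /
        (μ {ω' | Y ω' ≤ t}).toReal) :
    ∀ t : ℕ, 2 ≤ t → μ[ξ (t - 1) | 𝒢 t] =ᵐ[μ] ξ t := by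
  intro t ht
  have hξ_eq : ∀ s, ξ s = indicatorRatio μ {ω | Y ω ≤ s} := fun s => by
    ext ω
    simp [hξ, indicatorRatio, Set.indicator_apply, Measure.real]
  have hreal_ne : ∀ s, 1 ≤ s → μ.real {ω | Y ω ≤ s} ≠ 0 := fun s hs =>
    (ENNReal.toReal_pos (hprob s hs).ne' (measure_ne_top _ _)).ne'
  have hsub : ∀ {s r}, s ≤ r → {ω | Y ω ≤ s} ⊆ {ω | Y ω ≤ r} := fun hsr _ hω => le_trans hω hsr
  have hGt : MeasurableSet[𝒢 t] {ω | Y ω ≤ t} :=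
    h𝒢 t ▸ MeasurableSpace.measurableSet_generateFrom ⟨t, le_rfl, rfl⟩
  rw [hξ_eq, hξ_eq]
  refine condExp_ae_eq_of_isPiSystem (h𝒢le t) (h𝒢 t) (isPiSystem_setOf_le_of_le Y t)
    (integrable_indicatorRatio (hmeas _)) (integrable_indicatorRatio (hmeas _))
    (stronglyMeasurable_indicatorRatio hGt) ?_ ?_
  · rw [integral_indicatorRatio (hmeas _) (hreal_ne _ (by omega)),
      integral_indicatorRatio (hmeas _) (hreal_ne _ (by omega))]
  · rintro _ ⟨r, htr, rfl⟩
    rw [setIntegral_indicatorRatio_of_subset (hmeas _) (hreal_ne _ (by omega)) (hsub (by omega)),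
      setIntegral_indicatorRatio_of_subset (hmeas _) (hreal_ne _ (by omega)) (hsub htr)]

theorem indicator_ratio_reverse_martingale
    {Ω : Type*} [m0 : MeasurableSpace Ω] (μ : Measure Ω) [IsProbabilityMeasure μ]
    (Y : Ω → ℕ)
    (hmeas : ∀ s : ℕ, MeasurableSet {ω | Y ω ≤ s})
    (hpos : ∀ ω, 1 ≤ Y ω)
    (hprob : ∀ t : ℕ, 1 ≤ t → 0 < μ {ω | Y ω ≤ t})
    (𝒢 : ℕ → MeasurableSpace Ω)
    (h𝒢le : ∀ t, 𝒢 t ≤ m0)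
    (h𝒢 : ∀ t : ℕ, 𝒢 t =
      MeasurableSpace.generateFrom {A | ∃ s, t ≤ s ∧ A = {ω | Y ω ≤ s}})
    (ξ : ℕ → Ω → ℝ)
    (hξ : ∀ t ω, ξ t ω =
      ((if Y ω ≤ t then (1 : ℝ) else 0) - (μ {ω' | Y ω' ≤ t}).toReal) /
        (μ {ω' | Y ω' ≤ t}).toReal) :
    ∀ t : ℕ, 2 ≤ t → μ[ξ (t - 1) | 𝒢 t] =ᵐ[μ] ξ t :=
  indicator_ratio_reverse_martingale_general (m0 := m0) μ Y hmeas hprob 𝒢 h𝒢le h𝒢 ξ hξ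
end

section
/- Let B_i(t) = C(kt, i) p^i (1-p)^{kt - i} viewed as a smooth function of the real variable t > i/k, where k is a positive natural, 0 < p ≤ 1/2, i ≥ 2 a natural, and C(kt, i) = (kt)(kt-1)...(kt-i+1)/i!. If p k t ≤ 1/3 and t > (i-1)/k, then the second derivative B_i''(t) ≥ 0. -/
/-!
Up to a positive constant factor, `B = f` with `f t = (∏ j < i, (t - j / k)) * exp (c * t)` and
`c = k * log (1 - p)`. Differentiating the logarithm of `f` gives
`f'' = f * ((∑ j, b j + c) ^ 2 - ∑ j, b j ^ 2)` with `b j = (t - j / k)⁻¹`. For `t > (i - 1) / k`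
every `b j ≥ t⁻¹ > 0`, and `log (1 - p) ≥ -3p/2` together with `p k t ≤ 1/3` gives `c ≥ -t⁻¹ / 2`;
since `i ≥ 2`, these bounds make the bracket nonnegative.
-/

open Finset Real

section ProdSub

variable {ι : Type*} [DecidableEq ι] (s : Finset ι) (r : ι → ℝ)

theorem hasDerivAt_prod_sub (x : ℝ) :
    HasDerivAt (fun y => ∏ j ∈ s, (y - r j)) (∑ j ∈ s, ∏ l ∈ s.erase j, (x - r l)) x := by
  simpa using HasDerivAt.fun_finsetProd (u := s) fun j _ => (hasDerivAt_id x).sub_const (r j)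

theorem hasDerivAt_sum_prod_erase_sub (x : ℝ) :
    HasDerivAt (fun y => ∑ j ∈ s, ∏ l ∈ s.erase j, (y - r l))
      (∑ j ∈ s, ∑ l ∈ s.erase j, ∏ m ∈ (s.erase j).erase l, (x - r m)) x :=
  HasDerivAt.fun_sum fun j _ => hasDerivAt_prod_sub (s.erase j) r x

variable {s r} {x : ℝ}

theorem prod_erase_sub (hx : ∀ j ∈ s, x ≠ r j) {j : ι} (hj : j ∈ s) :
    ∏ l ∈ s.erase j, (x - r l) = (∏ l ∈ s, (x - r l)) * (x - r j)⁻¹ := by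
  rw [eq_mul_inv_iff_mul_eq₀ (sub_ne_zero.2 (hx j hj)), mul_comm,
    mul_prod_erase s (fun l => x - r l) hj]

theorem sum_prod_erase_sub (hx : ∀ j ∈ s, x ≠ r j) :
    ∑ j ∈ s, ∏ l ∈ s.erase j, (x - r l) = (∏ l ∈ s, (x - r l)) * ∑ j ∈ s, (x - r j)⁻¹ := by
  rw [mul_sum]
  exact sum_congr rfl fun j hj => prod_erase_sub hx hj

theorem sum_sum_prod_erase_erase_sub (hx : ∀ j ∈ s, x ≠ r j) :
    ∑ j ∈ s, ∑ l ∈ s.erase j, ∏ m ∈ (s.erase j).erase l, (x - r m) =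
      (∏ l ∈ s, (x - r l)) * ((∑ j ∈ s, (x - r j)⁻¹) ^ 2 - ∑ j ∈ s, ((x - r j)⁻¹) ^ 2) := by
  have hinner : ∀ j ∈ s, ∑ l ∈ s.erase j, ∏ m ∈ (s.erase j).erase l, (x - r m) =
      (∏ l ∈ s, (x - r l)) * ((x - r j)⁻¹ * ((∑ l ∈ s, (x - r l)⁻¹) - (x - r j)⁻¹)) := by
    intro j hj
    rw [sum_prod_erase_sub fun l hl => hx l (mem_of_mem_erase hl), prod_erase_sub hx hj,
      sum_erase_eq_sub hj, mul_assoc]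
  rw [sum_congr rfl hinner, ← mul_sum, sq, sum_mul, ← sum_sub_distrib]
  exact congrArg _ (sum_congr rfl fun j _ => by ring)

theorem hasDerivAt_deriv_prod_sub_mul_exp (c : ℝ) (hx : ∀ j ∈ s, x ≠ r j) :
    HasDerivAt (deriv fun y => (∏ j ∈ s, (y - r j)) * exp (c * y))
      ((∏ j ∈ s, (x - r j)) * exp (c * x) *
        ((∑ j ∈ s, (x - r j)⁻¹ + c) ^ 2 - ∑ j ∈ s, ((x - r j)⁻¹) ^ 2)) x := by
  have hexp (y : ℝ) : HasDerivAt (fun y => exp (c * y)) (exp (c * y) * c) y := by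
    simpa using ((hasDerivAt_id y).const_mul c).exp
  have hderiv : (deriv fun y => (∏ j ∈ s, (y - r j)) * exp (c * y)) = fun y =>
      (∑ j ∈ s, ∏ l ∈ s.erase j, (y - r l)) * exp (c * y) +
        (∏ j ∈ s, (y - r j)) * exp (c * y) * c :=
    funext fun y => ((hasDerivAt_prod_sub s r y).mul (hexp y)).deriv.trans (by ring)
  rw [hderiv]
  refine (((hasDerivAt_sum_prod_erase_sub s r x).fun_mul (hexp x)).fun_add
    (((hasDerivAt_prod_sub s r x).fun_mul (hexp x)).mul_const c)).congr_deriv ?_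
  rw [sum_sum_prod_erase_erase_sub hx, sum_prod_erase_sub hx]
  ring

end ProdSub

theorem sum_sq_le_sq_sum_add {ι : Type*} {s : Finset ι} {b : ι → ℝ} {a c : ℝ}
    (hs : 2 ≤ #s) (ha : 0 ≤ a) (hb : ∀ j ∈ s, a ≤ b j) (hc : -(a / 2) ≤ c) :
    ∑ j ∈ s, b j ^ 2 ≤ (∑ j ∈ s, b j + c) ^ 2 := by
  set S := ∑ j ∈ s, b j
  have hS : 0 ≤ S := sum_nonneg fun j hj => ha.trans (hb j hj)
  have hcross : a * (#s - 1) * S ≤ S ^ 2 - ∑ j ∈ s, b j ^ 2 := by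
    calc a * (#s - 1) * S = ∑ j ∈ s, a * (S - b j) := by
          rw [← mul_sum, sum_sub_distrib, sum_const, nsmul_eq_mul]; ring
      _ ≤ ∑ j ∈ s, b j * (S - b j) := sum_le_sum fun j hj =>
          mul_le_mul_of_nonneg_right (hb j hj) (sub_nonneg.2 (single_le_sum
            (fun l hl => ha.trans (hb l hl)) hj))
      _ = S ^ 2 - ∑ j ∈ s, b j ^ 2 := by
          rw [sq, sum_mul, ← sum_sub_distrib]; exact sum_congr rfl fun j _ => by ring
  have hs' : (2 : ℝ) ≤ #s := by exact_mod_cast hs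
  -- `(S + c) ^ 2 - ∑ b ^ 2 ≥ a (#s - 1) S + 2 c S + c ^ 2 ≥ a (#s - 2) S + c ^ 2`
  nlinarith [mul_nonneg (mul_nonneg ha (sub_nonneg.2 hs')) hS,
    mul_nonneg (by linarith : 0 ≤ c + a / 2) hS, sq_nonneg c]

theorem neg_three_halves_mul_le_log_one_sub {p : ℝ} (hp0 : 0 ≤ p) (hp : p ≤ 1 / 3) :
    -(3 / 2 * p) ≤ log (1 - p) := by
  have hp1 : 0 < 1 - p := by linarith
  calc -(3 / 2 * p) ≤ -(p / (1 - p)) := by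
        rw [neg_le_neg_iff, div_le_iff₀ hp1]; nlinarith
    _ = 1 - (1 - p)⁻¹ := by field_simp; ring
    _ ≤ log (1 - p) := one_sub_inv_le_log_of_pos hp1

theorem prod_div_factorial_mul_rpow_eq {k p : ℝ} (hk : k ≠ 0) (hp : p < 1) (i : ℕ) (t : ℝ) :
    (∏ j ∈ range i, (k * t - j)) / (i.factorial : ℝ) * p ^ i * (1 - p) ^ (k * t - i) =
      k ^ i * p ^ i / (i.factorial : ℝ) * exp (-(log (1 - p) * i)) *
        ((∏ j ∈ range i, (t - j / k)) * exp (log (1 - p) * k * t)) := by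
  have hfactor : ∏ j ∈ range i, (k * t - j) = k ^ i * ∏ j ∈ range i, (t - j / k) := by
    rw [← card_range i, ← prod_const, card_range, ← prod_mul_distrib]
    exact prod_congr rfl fun j _ => by field_simp
  rw [hfactor, rpow_def_of_pos (by linarith), mul_sub, sub_eq_add_neg, exp_add, ← neg_mul,
    mul_assoc (log (1 - p)) k t]
  ring

theorem Bi_second_deriv_nonneg_general (k i : ℕ) (p : ℝ) (hk : 1 ≤ k) (hi : 2 ≤ i)
    (hp0 : 0 < p)
    (B : ℝ → ℝ)
    (hB : ∀ t : ℝ, B t =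
      ((∏ j ∈ Finset.range i, ((k : ℝ) * t - j)) / (i.factorial : ℝ)) *
        p ^ i * (1 - p) ^ ((k : ℝ) * t - i))
    (t : ℝ) (ht : ((i : ℝ) - 1) / k < t) (hsmall : p * k * t ≤ 1/3) :
    0 ≤ deriv (deriv B) t := by
  have hk0 : (0 : ℝ) < k := by exact_mod_cast hk
  have hi2 : (2 : ℝ) ≤ i := by exact_mod_cast hi
  have hkt : (i : ℝ) - 1 < k * t := (div_lt_iff₀' hk0).1 ht
  have ht0 : 0 < t := by nlinarith
  have hp1 : p ≤ 1 / 3 := by nlinarith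
  have hroots : ∀ j ∈ range i, 0 < t - j / k := fun j hj => by
    have hj : (j : ℝ) + 1 ≤ i := by exact_mod_cast mem_range.1 hj
    rw [sub_pos, div_lt_iff₀ hk0]; linarith
  have hc : -(t⁻¹ / 2) ≤ log (1 - p) * k := by
    have h3pk : 3 * p * k ≤ t⁻¹ := by rw [← one_div, le_div_iff₀ ht0]; linarith
    nlinarith [neg_three_halves_mul_le_log_one_sub hp0.le hp1]
  have hBexp := funext fun y =>
    (hB y).trans (prod_div_factorial_mul_rpow_eq hk0.ne' (by linarith) i y)
  rw [hBexp, deriv_const_mul_field', deriv_const_mul_field']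
  beta_reduce
  rw [(hasDerivAt_deriv_prod_sub_mul_exp _ fun j hj => (sub_pos.1 (hroots j hj)).ne').deriv]
  have hsq := sum_sq_le_sq_sum_add (by simpa using hi) (inv_nonneg.2 ht0.le)
    (fun j hj => inv_anti₀ (hroots j hj) (by simp only [sub_le_self_iff]; positivity)) hc
  have hprod := prod_pos hroots
  exact mul_nonneg (by positivity) (mul_nonneg (by positivity) (sub_nonneg.2 hsq))

theorem Bi_second_deriv_nonneg (k i : ℕ) (p : ℝ) (hk : 1 ≤ k) (hi : 2 ≤ i)
    (hp0 : 0 < p) (hp : p ≤ 1/2)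
    (B : ℝ → ℝ)
    (hB : ∀ t : ℝ, B t =
      ((∏ j ∈ Finset.range i, ((k : ℝ) * t - j)) / (i.factorial : ℝ)) *
        p ^ i * (1 - p) ^ ((k : ℝ) * t - i))
    (t : ℝ) (ht : ((i : ℝ) - 1) / k < t) (hsmall : p * k * t ≤ 1/3) :
    0 ≤ deriv (deriv B) t :=
  Bi_second_deriv_nonneg_general k i p hk hi hp0 B hB t ht hsmall
end

section
/- For real numbers c₁ ≤ 0, kt > i-1 ≥ 1 (i ≥ 2 integer), if 2c₁ + 1/(kt - j') ≥ 0 for all 0 ≤ j' ≤ i-1, then (c₁ + Σ_{j=0}^{i-1} 1/(kt-j))² ≥ Σ_{j=0}^{i-1} 1/(kt-j)². -/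
/-!
Write `S = ∑ j, x j`. Expanding the square,
`(c + S)² = c² + ∑ j, x j² + ∑ j, x j * (2c + ∑ k ≠ j, x k)`,
so it suffices that every bracket is nonnegative. When the weights are nonnegative and there are
at least two of them, the bracket for `j` is at least `2c + x j₀` for any `j₀ ≠ j`, which is
nonnegative by hypothesis.
-/

open Finset

namespace Finset

variable {ι : Type*} [DecidableEq ι] {s : Finset ι} {x : ι → ℝ} {c : ℝ}

theorem sq_add_sum_eq (s : Finset ι) (x : ι → ℝ) (c : ℝ) :
    (c + ∑ j ∈ s, x j) ^ 2 =
      c ^ 2 + ∑ j ∈ s, x j ^ 2 + ∑ j ∈ s, x j * (2 * c + ∑ k ∈ s.erase j, x k) := by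
  have hcross : ∑ j ∈ s, x j * (2 * c + ∑ k ∈ s.erase j, x k) =
      2 * c * ∑ j ∈ s, x j + (∑ j ∈ s, x j) ^ 2 - ∑ j ∈ s, x j ^ 2 := by
    rw [sq (∑ j ∈ s, x j), mul_sum, sum_mul, ← sum_add_distrib, ← sum_sub_distrib]
    refine sum_congr rfl fun j hj => ?_
    rw [sum_erase_eq_sub hj]
    ring
  rw [hcross]
  ring

theorem sum_sq_le_sq_add_sum_of_erase (hx : ∀ j ∈ s, 0 ≤ x j)
    (h : ∀ j ∈ s, 0 ≤ 2 * c + ∑ k ∈ s.erase j, x k) :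
    ∑ j ∈ s, x j ^ 2 ≤ (c + ∑ j ∈ s, x j) ^ 2 := by
  have hcross : 0 ≤ ∑ j ∈ s, x j * (2 * c + ∑ k ∈ s.erase j, x k) :=
    sum_nonneg fun j hj => mul_nonneg (hx j hj) (h j hj)
  rw [sq_add_sum_eq]
  nlinarith [sq_nonneg c]

theorem sum_sq_le_sq_add_sum (hx : ∀ j ∈ s, 0 ≤ x j) (hs : 1 < #s)
    (h : ∀ j ∈ s, 0 ≤ 2 * c + x j) :
    ∑ j ∈ s, x j ^ 2 ≤ (c + ∑ j ∈ s, x j) ^ 2 := by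
  refine sum_sq_le_sq_add_sum_of_erase hx fun j hj => ?_
  obtain ⟨j₀, hj₀⟩ : (s.erase j).Nonempty := by
    rw [← card_pos, card_erase_of_mem hj]
    omega
  have hle : x j₀ ≤ ∑ k ∈ s.erase j, x k :=
    single_le_sum (fun k hk => hx k (mem_of_mem_erase hk)) hj₀
  linarith [h j₀ (mem_of_mem_erase hj₀)]

end Finset

theorem square_sum_ge_general (c₁ T : ℝ) (i : ℕ) (hi : 2 ≤ i)
    (hT : (i : ℝ) - 1 < T)
    (h : ∀ j' : ℕ, j' ≤ i - 1 → 0 ≤ 2 * c₁ + 1 / (T - j')) :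
    (c₁ + ∑ j ∈ Finset.range i, 1 / (T - j)) ^ 2 ≥
      ∑ j ∈ Finset.range i, 1 / (T - j) ^ 2 := by
  have hle : ∀ j ∈ range i, j ≤ i - 1 := fun j hj => by
    have := mem_range.mp hj
    omega
  have hpos : ∀ j ∈ range i, 0 ≤ 1 / (T - j) := fun j hj => by
    have hj : (j : ℝ) + 1 ≤ i := by exact_mod_cast mem_range.mp hj
    exact one_div_nonneg.mpr (by linarith)
  simp_rw [← one_div_pow]
  exact sum_sq_le_sq_add_sum hpos (by simp only [card_range]; omega) fun j hj => h j (hle j hj)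

theorem square_sum_ge (c₁ T : ℝ) (i : ℕ) (hc : c₁ ≤ 0) (hi : 2 ≤ i)
    (hT : (i : ℝ) - 1 < T)
    (h : ∀ j' : ℕ, j' ≤ i - 1 → 0 ≤ 2 * c₁ + 1 / (T - j')) :
    (c₁ + ∑ j ∈ Finset.range i, 1 / (T - j)) ^ 2 ≥
      ∑ j ∈ Finset.range i, 1 / (T - j) ^ 2 :=
  square_sum_ge_general c₁ T i hi hT h
end
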